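/- For all t > 0: (2 + cosh t)/3 > sinh t / t > cosh(t)^(1/3) > (1 + 2cosh t)/(2 + cosh t). -/

import Mathlib

/-!
Each hyperbolic inequality is of the form `g t < h t` with `g 0 = h 0`, and follows from
`(h - g)' > 0` on `(0, ∞)`; the derivatives are reduced, one or two differentiations deep, to
`x < sinh x` and `sinh x < x cosh x`. The upper bound for `sinh t / t` is the hyperbolic
Cusa–Huygens inequality, the middle one is Lazarević's `cosh t < (sinh t / t) ^ 3`. The last
inequality is algebraic in `y = cosh t ^ (1/3) > 1`:
`y (2 + y³) - (1 + 2 y³) = (y - 1)³ (y + 1)`.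
-/

open Real Set

lemma lt_of_hasDerivAt_of_deriv_pos {f f' : ℝ → ℝ} {a t : ℝ}
    (hf : ∀ x, HasDerivAt f (f' x) x) (hf' : ∀ x, a < x → 0 < f' x) (hat : a < t) :
    f a < f t := by
  have hmono : StrictMonoOn f (Ici a) := by
    refine strictMonoOn_of_hasDerivWithinAt_pos (convex_Ici a)
      (fun x _ ↦ (hf x).continuousAt.continuousWithinAt)
      (fun x _ ↦ (hf x).hasDerivWithinAt) ?_
    rw [interior_Ici]
    exact hf'
  exact hmono self_mem_Ici hat.le hat

namespace Real

variable {x : ℝ}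

lemma one_add_sq_div_two_lt_cosh (hx : 0 < x) : 1 + x ^ 2 / 2 < cosh x := by
  have key := lt_of_hasDerivAt_of_deriv_pos (f := fun y ↦ cosh y - (1 + y ^ 2 / 2))
    (f' := fun y ↦ sinh y - y)
    (fun y ↦ ((hasDerivAt_cosh y).sub
      ((hasDerivAt_const y 1).add ((hasDerivAt_pow 2 y).div_const 2))).congr_deriv
        (by push_cast; ring))
    (fun y hy ↦ sub_pos.mpr (self_lt_sinh_iff.mpr hy)) hx
  simp only [cosh_zero] at key
  linarith

lemma add_pow_three_div_six_lt_sinh (hx : 0 < x) : x + x ^ 3 / 6 < sinh x := by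
  have key := lt_of_hasDerivAt_of_deriv_pos (f := fun y ↦ sinh y - (y + y ^ 3 / 6))
    (f' := fun y ↦ cosh y - (1 + y ^ 2 / 2))
    (fun y ↦ ((hasDerivAt_sinh y).sub
      ((hasDerivAt_id y).add ((hasDerivAt_pow 3 y).div_const 6))).congr_deriv
        (by push_cast; ring))
    (fun y hy ↦ sub_pos.mpr (one_add_sq_div_two_lt_cosh hy)) hx
  simp only [sinh_zero] at key
  linarith

lemma sinh_lt_mul_cosh (hx : 0 < x) : sinh x < x * cosh x := by
  have key := lt_of_hasDerivAt_of_deriv_pos (f := fun y ↦ y * cosh y - sinh y)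
    (f' := fun y ↦ y * sinh y)
    (fun y ↦ (((hasDerivAt_id y).mul (hasDerivAt_cosh y)).sub (hasDerivAt_sinh y)).congr_deriv
      (by simp))
    (fun y hy ↦ mul_pos hy (sinh_pos_iff.mpr hy)) hx
  simp only [sinh_zero] at key
  linarith

lemma two_mul_cosh_lt_mul_sinh_add_two (hx : 0 < x) : 2 * cosh x < x * sinh x + 2 := by
  have key := lt_of_hasDerivAt_of_deriv_pos (f := fun y ↦ y * sinh y + 2 - 2 * cosh y)
    (f' := fun y ↦ y * cosh y - sinh y)
    (fun y ↦ ((((hasDerivAt_id y).mul (hasDerivAt_sinh y)).add (hasDerivAt_const y 2)).sub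
      ((hasDerivAt_cosh y).const_mul 2)).congr_deriv
        (by simp only [one_mul, id_eq, add_zero]; ring))
    (fun y hy ↦ sub_pos.mpr (sinh_lt_mul_cosh hy)) hx
  simp only [sinh_zero, cosh_zero] at key
  linarith

lemma three_mul_sinh_lt_mul_two_add_cosh (hx : 0 < x) : 3 * sinh x < x * (2 + cosh x) := by
  have key := lt_of_hasDerivAt_of_deriv_pos (f := fun y ↦ y * (2 + cosh y) - 3 * sinh y)
    (f' := fun y ↦ y * sinh y + 2 - 2 * cosh y)
    (fun y ↦ (((hasDerivAt_id y).mul ((hasDerivAt_const y 2).add (hasDerivAt_cosh y))).sub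
      ((hasDerivAt_sinh y).const_mul 3)).congr_deriv
        (by simp only [Pi.add_apply, one_mul, id_eq, zero_add]; ring))
    (fun y hy ↦ sub_pos.mpr (two_mul_cosh_lt_mul_sinh_add_two hy)) hx
  simp only [sinh_zero] at key
  linarith

lemma pow_three_mul_cosh_lt_sinh_pow_three (hx : 0 < x) : x ^ 3 * cosh x < sinh x ^ 3 := by
  have hderiv (y : ℝ) (hy : 0 < y) : y ^ 3 * sinh y < 3 * cosh y * (sinh y ^ 2 - y ^ 2) := by
    have hsq : y ^ 4 / 3 < sinh y ^ 2 - y ^ 2 := by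
      have := pow_lt_pow_left₀ (add_pow_three_div_six_lt_sinh hy) (by positivity) two_ne_zero
      nlinarith [pow_pos hy 6]
    have hc : 0 < cosh y := cosh_pos y
    calc y ^ 3 * sinh y < y ^ 3 * (y * cosh y) := by gcongr; exact sinh_lt_mul_cosh hy
      _ = 3 * cosh y * (y ^ 4 / 3) := by ring
      _ < 3 * cosh y * (sinh y ^ 2 - y ^ 2) := by gcongr
  have key := lt_of_hasDerivAt_of_deriv_pos (f := fun y ↦ sinh y ^ 3 - y ^ 3 * cosh y)
    (f' := fun y ↦ 3 * cosh y * (sinh y ^ 2 - y ^ 2) - y ^ 3 * sinh y)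
    (fun y ↦ (((hasDerivAt_sinh y).pow 3).sub ((hasDerivAt_pow 3 y).mul
      (hasDerivAt_cosh y))).congr_deriv (by push_cast; ring))
    (fun y hy ↦ sub_pos.mpr (hderiv y hy)) hx
  simp only [sinh_zero] at key
  linarith

end Real

lemma one_add_two_mul_pow_three_div_lt {y : ℝ} (hy : 1 < y) :
    (1 + 2 * y ^ 3) / (2 + y ^ 3) < y := by
  have hfactor : y * (2 + y ^ 3) - (1 + 2 * y ^ 3) = (y - 1) ^ 3 * (y + 1) := by ring
  have hpos : 0 < (y - 1) ^ 3 * (y + 1) := by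
    have : 0 < y - 1 := sub_pos.mpr hy
    positivity
  rw [div_lt_iff₀ (by positivity)]
  linarith

theorem stmt17 (t : ℝ) (ht : 0 < t) :
    Real.sinh t / t < (2 + Real.cosh t)/3 ∧
    Real.cosh t ^ ((1:ℝ)/3) < Real.sinh t / t ∧
    (1 + 2*Real.cosh t)/(2 + Real.cosh t) < Real.cosh t ^ ((1:ℝ)/3) := by
  have hc : 0 ≤ cosh t := (cosh_pos t).le
  have hsinh : 0 < sinh t / t := div_pos (sinh_pos_iff.mpr ht) ht
  have hcube : (cosh t ^ ((1:ℝ)/3)) ^ 3 = cosh t := by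
    rw [one_div, ← Nat.cast_ofNat, rpow_inv_natCast_pow hc three_ne_zero]
  refine ⟨?_, ?_, ?_⟩
  · rw [div_lt_div_iff₀ ht three_pos]
    linarith [three_mul_sinh_lt_mul_two_add_cosh ht]
  · rw [one_div, rpow_inv_lt_iff_of_pos hc hsinh.le three_pos, rpow_ofNat, div_pow,
      lt_div_iff₀ (pow_pos ht 3)]
    linarith [pow_three_mul_cosh_lt_sinh_pow_three ht]
  · have hroot : 1 < cosh t ^ ((1:ℝ)/3) :=
      one_lt_rpow (one_lt_cosh.mpr ht.ne') (by norm_num)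
    simpa only [hcube] using one_add_two_mul_pow_three_div_lt hroot
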